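/- For the 32-dimensional Pathions with strut constant S satisfying 8 < S < 16, writing s = S − 8, the product (i_{f} + i_{16 + 8 + a})(i_8 − i_{16 + s}) equals zero, where (a, s, f) ranges over triples with f = a XOR s coming from a Sedenion strut (i.e., (f, a, s) an associative Octonion trip in CPO order with a, f < 8). -/

import Mathlib

noncomputable section

/-- Cayley-Dickson algebra of dimension `2^n` over `ℝ`, as iterated pairs. -/
@[reducible] def CD : ℕ → Type
  | 0 => ℝ
  | n+1 => CD n × CD n

def CDzero : (n : ℕ) → CD n
  | 0 => (0 : ℝ)
  | n+1 => (CDzero n, CDzero n)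

def CDadd : (n : ℕ) → CD n → CD n → CD n
  | 0, x, y => ((x + y : ℝ) : CD 0)
  | n+1, x, y => ((CDadd n (x : CD (n+1)).1 (y : CD (n+1)).1,
      CDadd n (x : CD (n+1)).2 (y : CD (n+1)).2) : CD (n+1))

def CDneg : (n : ℕ) → CD n → CD n
  | 0, x => ((-(x : ℝ) : ℝ) : CD 0)
  | n+1, x => (((CDneg n (x : CD (n+1)).1, CDneg n (x : CD (n+1)).2)) : CD (n+1))

def CDconj : (n : ℕ) → CD n → CD n
  | 0, x => x
  | n+1, x => (((CDconj n (x : CD (n+1)).1, CDneg n (x : CD (n+1)).2)) : CD (n+1))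

/-- Cayley-Dickson multiplication: `(a,b)(c,d) = (ac - d* b, d a + b c*)`. -/
def CDmul : (n : ℕ) → CD n → CD n → CD n
  | 0, x, y => ((x * y : ℝ) : CD 0)
  | n+1, x, y =>
      (((CDadd n (CDmul n (x : CD (n+1)).1 (y : CD (n+1)).1)
          (CDneg n (CDmul n (CDconj n (y : CD (n+1)).2) (x : CD (n+1)).2)),
        CDadd n (CDmul n (y : CD (n+1)).2 (x : CD (n+1)).1)
          (CDmul n (x : CD (n+1)).2 (CDconj n (y : CD (n+1)).1)))) : CD (n+1))

def CDsub (n : ℕ) (x y : CD n) : CD n := CDadd n x (CDneg n y)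

def CDsmul : (n : ℕ) → ℝ → CD n → CD n
  | 0, c, x => ((c * x : ℝ) : CD 0)
  | n+1, c, x => (((CDsmul n c (x : CD (n+1)).1, CDsmul n c (x : CD (n+1)).2)) : CD (n+1))

/-- The imaginary/basis unit `i_k` of the `2^n`-ions (`k < 2^n`); `i_0 = 1`. -/
def CDunit : (n : ℕ) → ℕ → CD n
  | 0, _ => ((1 : ℝ) : CD 0)
  | n+1, k =>
      if k < 2^n then (((CDunit n k, CDzero n)) : CD (n+1))
      else (((CDzero n, CDunit n (k - 2^n))) : CD (n+1))

/-- `(a,b,c)` is an associative triplet in cyclic positive order among the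
indices of the `2^n`-ions. -/
def IsCPO (n : ℕ) (a b c : ℕ) : Prop :=
  CDmul n (CDunit n a) (CDunit n b) = CDunit n c ∧
  CDmul n (CDunit n b) (CDunit n c) = CDunit n a ∧
  CDmul n (CDunit n c) (CDunit n a) = CDunit n b

/-!
In the Cayley–Dickson doubling `(A, B)(C, D) = (AC - D*B, DA + BC*)`, take
`X = ((p, 0), (0, q))` and `Y = ((0, 1), (-r, 0))` with `r` imaginary. Evaluating the four
products half by half gives `XY = ((0, p - qr), (q - rp, 0))`, so `XY = 0` as soon as
`qr = p` and `rp = q`. In the Pathions, `X = i_f + i_{24+a}` and `Y = i_8 - i_{16+s}` have this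
shape with `p, q, r = i_f, i_a, i_s`, and the two products are read off the Octonion trip
`(f, a, s)`.
-/

theorem CDneg_zero : ∀ n, CDneg n (CDzero n) = CDzero n
  | 0 => neg_zero
  | n + 1 => Prod.ext (CDneg_zero n) (CDneg_zero n)

theorem CDconj_zero : ∀ n, CDconj n (CDzero n) = CDzero n
  | 0 => rfl
  | n + 1 => Prod.ext (CDconj_zero n) (CDneg_zero n)

theorem CDadd_zero : ∀ n (x : CD n), CDadd n x (CDzero n) = x
  | 0, x => add_zero (x : ℝ)
  | n + 1, x => Prod.ext (CDadd_zero n x.1) (CDadd_zero n x.2)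

theorem CDzero_add : ∀ n (x : CD n), CDadd n (CDzero n) x = x
  | 0, x => zero_add (x : ℝ)
  | n + 1, x => Prod.ext (CDzero_add n x.1) (CDzero_add n x.2)

theorem CDadd_comm : ∀ n (x y : CD n), CDadd n x y = CDadd n y x
  | 0, x, y => add_comm (x : ℝ) y
  | n + 1, x, y => Prod.ext (CDadd_comm n x.1 y.1) (CDadd_comm n x.2 y.2)

theorem CDadd_neg : ∀ n (x : CD n), CDadd n x (CDneg n x) = CDzero n
  | 0, x => add_neg_cancel (x : ℝ)
  | n + 1, x => Prod.ext (CDadd_neg n x.1) (CDadd_neg n x.2)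

theorem CDneg_neg : ∀ n (x : CD n), CDneg n (CDneg n x) = x
  | 0, x => neg_neg (x : ℝ)
  | n + 1, x => Prod.ext (CDneg_neg n x.1) (CDneg_neg n x.2)

theorem CDconj_neg : ∀ n (x : CD n), CDconj n (CDneg n x) = CDneg n (CDconj n x)
  | 0, _ => rfl
  | n + 1, x => Prod.ext (CDconj_neg n x.1) rfl

theorem CDneg_add : ∀ n (x y : CD n),
    CDneg n (CDadd n x y) = CDadd n (CDneg n x) (CDneg n y)
  | 0, x, y => neg_add (x : ℝ) y
  | n + 1, x, y => Prod.ext (CDneg_add n x.1 y.1) (CDneg_add n x.2 y.2)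

theorem CDzero_mul_and_mul_zero : ∀ n (x : CD n),
    CDmul n (CDzero n) x = CDzero n ∧ CDmul n x (CDzero n) = CDzero n
  | 0, x => ⟨zero_mul (x : ℝ), mul_zero (x : ℝ)⟩
  | n + 1, x => by
    have zero_mul y := (CDzero_mul_and_mul_zero n y).1
    have mul_zero y := (CDzero_mul_and_mul_zero n y).2
    constructor <;>
      simp only [CDmul, CDzero, zero_mul, mul_zero, CDconj_zero, CDneg_zero, CDadd_zero]

theorem CDzero_mul (n : ℕ) (x : CD n) : CDmul n (CDzero n) x = CDzero n :=
  (CDzero_mul_and_mul_zero n x).1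

theorem CDmul_zero (n : ℕ) (x : CD n) : CDmul n x (CDzero n) = CDzero n :=
  (CDzero_mul_and_mul_zero n x).2

theorem CDneg_mul_and_mul_neg : ∀ n (x y : CD n),
    CDmul n (CDneg n x) y = CDneg n (CDmul n x y) ∧ CDmul n x (CDneg n y) = CDneg n (CDmul n x y)
  | 0, x, y => ⟨neg_mul (x : ℝ) y, mul_neg (x : ℝ) y⟩
  | n + 1, x, y => by
    have neg_mul u v := (CDneg_mul_and_mul_neg n u v).1
    have mul_neg u v := (CDneg_mul_and_mul_neg n u v).2
    constructor <;> simp only [CDmul, CDneg, neg_mul, mul_neg, CDconj_neg, CDneg_add]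

theorem CDneg_mul (n : ℕ) (x y : CD n) : CDmul n (CDneg n x) y = CDneg n (CDmul n x y) :=
  (CDneg_mul_and_mul_neg n x y).1

theorem CDunit_of_lt {n k : ℕ} (hk : k < 2 ^ n) :
    CDunit (n + 1) k = ((CDunit n k, CDzero n) : CD (n + 1)) :=
  if_pos hk

theorem CDunit_two_pow_add (n k : ℕ) :
    CDunit (n + 1) (2 ^ n + k) = ((CDzero n, CDunit n k) : CD (n + 1)) := by
  rw [CDunit, if_neg (by omega), Nat.add_sub_cancel_left]

theorem CDconj_one : ∀ n, CDconj n (CDunit n 0) = CDunit n 0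
  | 0 => rfl
  | n + 1 => by
    rw [CDunit_of_lt (Nat.two_pow_pos n)]
    exact Prod.ext (CDconj_one n) (CDneg_zero n)

theorem CDmul_one : ∀ n (x : CD n), CDmul n x (CDunit n 0) = x
  | 0, x => mul_one (x : ℝ)
  | n + 1, x => by
    rw [CDunit_of_lt (Nat.two_pow_pos n)]
    simp only [CDmul, CDmul_one n, CDconj_zero, CDconj_one, CDzero_mul, CDneg_zero, CDadd_zero,
      CDzero_add]

theorem CDone_mul : ∀ n (x : CD n), CDmul n (CDunit n 0) x = x
  | 0, x => one_mul (x : ℝ)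
  | n + 1, x => by
    rw [CDunit_of_lt (Nat.two_pow_pos n)]
    simp only [CDmul, CDone_mul n, CDmul_one, CDzero_mul, CDmul_zero, CDneg_zero, CDadd_zero]

theorem CDconj_unit :
    ∀ {n k : ℕ}, 0 < k → k < 2 ^ n → CDconj n (CDunit n k) = CDneg n (CDunit n k)
  | 0, k, hk, hk' => by omega
  | n + 1, k, hk, _ => by
    by_cases hlt : k < 2 ^ n
    · rw [CDunit_of_lt hlt]
      exact Prod.ext (CDconj_unit hk hlt) rfl
    · obtain ⟨j, rfl⟩ := Nat.exists_eq_add_of_le (not_lt.mp hlt)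
      rw [CDunit_two_pow_add]
      exact Prod.ext ((CDconj_zero n).trans (CDneg_zero n).symm) rfl

section

variable {n : ℕ}

theorem CDmul_succ (x y : CD (n + 1)) :
    CDmul (n + 1) x y =
      (CDadd n (CDmul n x.1 y.1) (CDneg n (CDmul n (CDconj n y.2) x.2)),
        CDadd n (CDmul n y.2 x.1) (CDmul n x.2 (CDconj n y.1))) :=
  rfl

theorem CDmul_inl_inl (u v : CD n) :
    CDmul (n + 1) ((u, CDzero n) : CD (n + 1)) (v, CDzero n) = (CDmul n u v, CDzero n) := by
  simp only [CDmul_succ, CDconj_zero, CDneg_zero, CDzero_mul, CDmul_zero, CDadd_zero]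

theorem CDmul_inl_inr (u v : CD n) :
    CDmul (n + 1) ((u, CDzero n) : CD (n + 1)) (CDzero n, v) = (CDzero n, CDmul n v u) := by
  simp only [CDmul_succ, CDneg_zero, CDzero_mul, CDmul_zero, CDadd_zero]

theorem CDmul_inr_inr (u v : CD n) :
    CDmul (n + 1) ((CDzero n, u) : CD (n + 1)) (CDzero n, v) =
      (CDneg n (CDmul n (CDconj n v) u), CDzero n) := by
  simp only [CDmul_succ, CDconj_zero, CDmul_zero, CDadd_zero, CDzero_add]

theorem IsCPO.of_succ {a b c : ℕ} (h : IsCPO (n + 1) a b c) (ha : a < 2 ^ n) (hb : b < 2 ^ n)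
    (hc : c < 2 ^ n) : IsCPO n a b c := by
  simpa only [IsCPO, CDunit_of_lt ha, CDunit_of_lt hb, CDunit_of_lt hc, CDmul_inl_inl,
    Prod.mk.injEq, and_true] using h

theorem CDmul_sandMandala_eq {p q r : CD n} (hr : CDconj n r = CDneg n r) :
    CDmul (n + 2) (((p, CDzero n), (CDzero n, q)) : CD (n + 2))
        ((CDzero n, CDunit n 0), (CDneg n r, CDzero n)) =
      ((CDzero n, CDsub n p (CDmul n q r)), (CDsub n q (CDmul n r p), CDzero n)) := by
  simp only [CDmul_succ (n := n + 1), CDconj, CDconj_neg, hr, CDneg_neg, CDneg_zero, CDconj_zero,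
    CDmul_inl_inl, CDmul_inl_inr, CDmul_inr_inr, CDone_mul, CDneg_mul, CDconj_one, CDadd, CDneg,
    CDadd_zero, CDsub]
  rw [CDadd_comm n (CDneg n _) q]

theorem CDmul_sandMandala_eq_zero {p q r : CD n} (hr : CDconj n r = CDneg n r)
    (hqr : CDmul n q r = p) (hrp : CDmul n r p = q) :
    CDmul (n + 2) (((p, CDzero n), (CDzero n, q)) : CD (n + 2))
        ((CDzero n, CDunit n 0), (CDneg n r, CDzero n)) = CDzero (n + 2) := by
  rw [CDmul_sandMandala_eq hr, hqr, hrp, CDsub, CDadd_neg, CDsub, CDadd_neg]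
  rfl

theorem CDmul_add_unit_sub_unit_eq_zero {a s f : ℕ} (hs0 : 0 < s) (hs : s < 2 ^ n)
    (hf : f < 2 ^ n) (has : CDmul n (CDunit n a) (CDunit n s) = CDunit n f)
    (hsf : CDmul n (CDunit n s) (CDunit n f) = CDunit n a) :
    CDmul (n + 2) (CDadd (n + 2) (CDunit (n + 2) f) (CDunit (n + 2) (2 ^ (n + 1) + 2 ^ n + a)))
      (CDsub (n + 2) (CDunit (n + 2) (2 ^ n)) (CDunit (n + 2) (2 ^ (n + 1) + s))) =
      CDzero (n + 2) := by
  have hg : CDunit (n + 1) (2 ^ n) = ((CDzero n, CDunit n 0) : CD (n + 1)) := by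
    simpa only [add_zero] using CDunit_two_pow_add n 0
  have hlt : 2 ^ n < 2 ^ (n + 1) := Nat.pow_lt_pow_succ one_lt_two
  rw [add_assoc, CDunit_two_pow_add, CDunit_two_pow_add, CDunit_two_pow_add, CDunit_of_lt hlt, hg,
    CDunit_of_lt (hf.trans hlt), CDunit_of_lt hf, CDunit_of_lt hs]
  simp only [CDsub, CDadd, CDneg, CDzero, CDadd_zero, CDzero_add, CDneg_zero]
  exact CDmul_sandMandala_eq_zero (CDconj_unit hs0 hs) has hsf

end

theorem pathion_sand_mandala_general (s a f : ℕ) (hs0 : 0 < s) (hs : s < 8)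
    (ha : a < 8) (hf : f < 8) (h : IsCPO 5 f a s) :
    CDmul 5 (CDadd 5 (CDunit 5 f) (CDunit 5 (16 + 8 + a)))
      (CDsub 5 (CDunit 5 8) (CDunit 5 (16 + s))) = CDzero 5 := by
  obtain ⟨-, has, hsf⟩ := (h.of_succ (n := 4) (by omega) (by omega) (by omega)).of_succ hf ha hs
  exact CDmul_add_unit_sub_unit_eq_zero hs0 hs hf has hsf

/-- Sand-mandala computation in the 32-D Pathions (`G = 16`, `g = 8`): for a
strut constant `S = 8 + s` with `0 < s < 8`, if `(f, a, s)` is a CPO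
associative Octonion trip with `a, f < 8` and `f = a XOR s` (a Sedenion
strut), then `(i_f + i_{16+8+a})(i_8 - i_{16+s}) = 0`. -/
theorem pathion_sand_mandala (s a f : ℕ) (hs0 : 0 < s) (hs : s < 8)
    (ha : a < 8) (hf : f < 8) (hfa : f = a ^^^ s) (h : IsCPO 5 f a s) :
    CDmul 5 (CDadd 5 (CDunit 5 f) (CDunit 5 (16 + 8 + a)))
      (CDsub 5 (CDunit 5 8) (CDunit 5 (16 + s))) = CDzero 5 :=
  pathion_sand_mandala_general s a f hs0 hs ha hf h

end
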